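/- Let F(S) = r_S·(K_S − S)·(g_x + a_{x,S}·S + μ_x)·(S + 1) be a cubic with F(0) > 0, F'(0) > 0, negative leading coefficient, and F(K_S) = 0, and let H(S; N) = G_S(N)·K_S·(a_{S,x}·(g_x + a_{x,S}·S) + μ_x) be an increasing affine function of S with H(0;N) > 0. If H(0;N) < F(0), then F(S) = H(S;N) has exactly one solution S* ∈ (0, K_S). -/
import Mathlib


theorem RSS_unique_when_H0_lt_F0
    (rS KS gx axS μx aSx GSN : ℝ)
    (hrS : 0 < rS) (hKS : 1 < KS) (hgx : 0 < gx) (haxS : 0 < axS)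
    (hμx : 0 < μx) (haSx : aSx ∈ Set.Ioo (0 : ℝ) 1) (hGSN : 0 < GSN) :
    let F : ℝ → ℝ := fun S => rS * (KS - S) * (gx + axS * S + μx) * (S + 1)
    let H : ℝ → ℝ := fun S => GSN * KS * (aSx * (gx + axS * S) + μx)
    H 0 < F 0 → ∃! S, S ∈ Set.Ioo 0 KS ∧ F S = H S := by
  intro F H hlt
  obtain ⟨haSx0, haSx1⟩ := haSx
  have hKS0 : (0 : ℝ) < KS := lt_trans one_pos hKS
  set c : ℝ := gx + μx with hc
  set a : ℝ := axS with ha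
  set A : ℝ := GSN * KS * aSx with hA
  set B : ℝ := GSN * KS * (μx * (1 - aSx)) with hB
  have hcpos : 0 < c := by positivity
  have hapos : 0 < a := haxS
  have hBpos : 0 < B := by
    have : 0 < 1 - aSx := by linarith
    positivity
  have hF : ∀ S, F S = rS * (KS - S) * (gx + axS * S + μx) * (S + 1) := fun _ => rfl
  have hH : ∀ S, H S = GSN * KS * (aSx * (gx + axS * S) + μx) := fun _ => rfl
  -- Key decomposition
  have hdec : ∀ S, F S - H S = (c + a * S) * (rS * (KS - S) * (S + 1) - A) - B := by
    intro S; rw [hF, hH]; ring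
  -- F 0 - H 0 > 0 rewritten
  have h0 : B < c * (rS * KS - A) := by
    have h1 := hdec 0
    have h' : 0 < F 0 - H 0 := by linarith
    have h2 : (c + a * 0) * (rS * (KS - 0) * (0 + 1) - A) - B = c * (rS * KS - A) - B := by
      ring
    rw [h1, h2] at h'
    linarith
  -- value at KS is negative
  have hgKS : F KS - H KS < 0 := by
    rw [hF, hH]
    have h1 : rS * (KS - KS) * (gx + axS * KS + μx) * (KS + 1) = 0 := by ring
    have h2 : 0 < GSN * KS * (aSx * (gx + axS * KS) + μx) := by positivity
    linarith
  have hg0 : 0 < F 0 - H 0 := by linarith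
  -- existence via IVT
  have hcont : ContinuousOn (fun S => F S - H S) (Set.Icc 0 KS) := by
    apply Continuous.continuousOn
    simp only [hF, hH]
    fun_prop
  have hsub := intermediate_value_Ioo' (le_of_lt hKS0) hcont
  have hmem : (0 : ℝ) ∈ Set.Ioo (F KS - H KS) (F 0 - H 0) := ⟨hgKS, hg0⟩
  obtain ⟨s, hsIoo, hs0⟩ := hsub hmem
  have hs0' : F s - H s = 0 := hs0
  have hseq : F s = H s := by linarith
  -- uniqueness core: no two distinct roots
  have key : ∀ u v, u ∈ Set.Ioo 0 KS → v ∈ Set.Ioo 0 KS → F u = H u → F v = H v →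
      u < v → False := by
    intro u v hu hv hfu hfv huv
    obtain ⟨hu0, huK⟩ := hu
    obtain ⟨hv0, hvK⟩ := hv
    have hvu : 0 < v - u := by linarith
    have hcu : 0 < c + a * u := by positivity
    have hcv : 0 < c + a * v := by positivity
    have eq1 : (c + a * u) * (rS * (KS - u) * (u + 1) - A) = B := by
      have h1 := hdec u; rw [hfu] at h1; linarith
    have eq2 : (c + a * v) * (rS * (KS - v) * (v + 1) - A) = B := by
      have h1 := hdec v; rw [hfv] at h1; linarith
    -- polynomial identity (concavity of the quadratic part)
    have hid : v * (c + a * v) * c * ((c + a * u) * (rS * (KS - u) * (u + 1) - A))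
        = (v - u) * (c + a * u) * (c + a * v) * (c * (rS * KS - A))
          + u * c * (c + a * u) * ((c + a * v) * (rS * (KS - v) * (v + 1) - A))
          + rS * u * v * (v - u) * c * (c + a * u) * (c + a * v) := by
      ring
    rw [eq1, eq2] at hid
    -- convexity of 1/x in polynomial form
    have keyeq : (v - u) * (c + a * u) * (c + a * v) * B + u * c * (c + a * u) * B
        - v * (c + a * v) * c * B = a ^ 2 * u * v * (v - u) * B := by ring
    have h1 : 0 < (v - u) * (c + a * u) * (c + a * v) * (c * (rS * KS - A) - B) := by
      have hcQ : 0 < c * (rS * KS - A) - B := by linarith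
      positivity
    have h1' : (v - u) * (c + a * u) * (c + a * v) * (c * (rS * KS - A))
        - (v - u) * (c + a * u) * (c + a * v) * B
        = (v - u) * (c + a * u) * (c + a * v) * (c * (rS * KS - A) - B) := by ring
    have h2 : 0 < a ^ 2 * u * v * (v - u) * B := by positivity
    have h3 : 0 < rS * u * v * (v - u) * c * (c + a * u) * (c + a * v) := by positivity
    linarith
  refine ⟨s, ⟨hsIoo, hseq⟩, ?_⟩
  rintro y ⟨hyIoo, hyeq⟩
  rcases lt_trichotomy y s with h | h | h
  · exact (key y s hyIoo hsIoo hyeq hseq h).elim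
  · exact h
  · exact (key s y hsIoo hyIoo hseq hyeq h).elim
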